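/- For any classical instance I = (A, ι^n) of unsigned strings such that b_τ(I) > 0 and Σ_A \ Σ_{ι^n} = ∅ (A contains no α-element), there exists a transposition τ such that b_τ(A·τ, ι^n) ≤ b_τ(A, ι^n) − 1, i.e., τ removes at least one transposition breakpoint of A. -/

import Mathlib

/-- A gene of the origin string: either a label in `{1, …, n}` (`some x`) or an
`α`-element (`none`), i.e. a gene absent from the target genome. -/
abbrev Gene := Option ℕ

/-- `A` is a valid origin string for a classical instance `I = (A, ι^n)`:
all its labels lie in `{1, …, n}` and each label occurs at most once
(`α`-elements may repeat). -/
def ValidString (n : ℕ) (A : List Gene) : Prop :=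
  (∀ x : ℕ, some x ∈ A → 1 ≤ x ∧ x ≤ n) ∧ (∀ x : ℕ, A.count (some x) ≤ 1)

/-- The extended version of `A`: `A_0 = 0` and `A_{|A|+1} = n+1` are appended. -/
def extStr (n : ℕ) (A : List Gene) : List Gene :=
  some 0 :: (A ++ [some (n + 1)])

/-- `|Σ_{ι^n} \ Σ_A|`: the number of labels of the target absent from `A`. -/
def missingCount (n : ℕ) (A : List Gene) : ℕ :=
  ((Finset.Icc 1 n).filter (fun x => some x ∉ A)).card

/-- `posterior(x, I)`: the smallest common label greater than `x`
(`n+1` if there is none, `α` for `x = α`). -/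
def postOf (n : ℕ) (A : List Gene) : Gene → Gene
  | none => none
  | some x =>
    if h : ((Finset.Icc 1 n).filter (fun y => some y ∈ A ∧ x < y)).Nonempty then
      some (((Finset.Icc 1 n).filter (fun y => some y ∈ A ∧ x < y)).min' h)
    else
      some (n + 1)

/-- `anterior(x, I)`: the largest common label smaller than `x`
(`0` if there is none, `α` for `x = α`). -/
def antOf (n : ℕ) (A : List Gene) : Gene → Gene
  | none => none
  | some x =>
    if h : ((Finset.Icc 1 n).filter (fun y => some y ∈ A ∧ y < x)).Nonempty then
      some (((Finset.Icc 1 n).filter (fun y => some y ∈ A ∧ y < x)).max' h)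
    else
      some 0

/-- `b_τ(I)`: the number of transposition breakpoints of the instance `I = (A, ι^n)`. -/
def bT (n : ℕ) (A : List Gene) : ℕ :=
  ((Finset.range (A.length + 1)).filter (fun t =>
    (extStr n A).getD (t + 1) none ≠ postOf n A ((extStr n A).getD t none))).card

/-- `b_ρ(I)`: the number of unsigned-reversal breakpoints of the instance `I = (A, ι^n)`. -/
def bR (n : ℕ) (A : List Gene) : ℕ :=
  ((Finset.range (A.length + 1)).filter (fun t =>
    (extStr n A).getD (t + 1) none ≠ postOf n A ((extStr n A).getD t none) ∧
    (extStr n A).getD (t + 1) none ≠ antOf n A ((extStr n A).getD t none))).card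

/-- The reversal `ρ(i,j)`, `1 ≤ i ≤ j ≤ |A|`, with explicit parameters `i`, `j`:
it reverses the segment `(A_i … A_j)`, transforming `A` into `A'`. -/
def RevAt (A : List Gene) (i j : ℕ) (A' : List Gene) : Prop :=
  1 ≤ i ∧ i ≤ j ∧ j ≤ A.length ∧
  A' = A.take (i - 1) ++ ((A.drop (i - 1)).take (j - i + 1)).reverse ++ A.drop j

/-- `A'` is obtained from `A` by a reversal. -/
def RevN (A A' : List Gene) : Prop := ∃ i j : ℕ, RevAt A i j A'

/-- `A'` is obtained from `A` by a transposition `τ(i,j,k)`, `1 ≤ i < j < k ≤ |A|+1`,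
exchanging the adjacent segments `(A_i … A_{j−1})` and `(A_j … A_{k−1})`. -/
def TranspN (A A' : List Gene) : Prop :=
  ∃ i j k : ℕ, 1 ≤ i ∧ i < j ∧ j < k ∧ k ≤ A.length + 1 ∧
    A' = A.take (i - 1) ++ (A.drop (j - 1)).take (k - j) ++
         (A.drop (i - 1)).take (j - i) ++ A.drop (k - 1)

/-- `A'` is obtained from `A` by an insertion `φ(i,σ)`: a nonempty repetition-free
string `σ`, consisting only of labels of `Σ_{ι^n} \ Σ_A`, is inserted after position `i`. -/
def InsN (n : ℕ) (A A' : List Gene) : Prop :=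
  ∃ (i : ℕ) (σ : List Gene), i ≤ A.length ∧ σ ≠ [] ∧ σ.Nodup ∧
    (∀ e ∈ σ, ∃ x : ℕ, e = some x ∧ 1 ≤ x ∧ x ≤ n ∧ some x ∉ A) ∧
    A' = A.take i ++ σ ++ A.drop i

/-- `A'` is obtained from `A` by a deletion `ψ(i,j)`: the segment `(A_i … A_j)`,
consisting only of `α`-elements, is removed. -/
def DelN (A A' : List Gene) : Prop :=
  ∃ i j : ℕ, 1 ≤ i ∧ i ≤ j ∧ j ≤ A.length ∧
    (∀ e ∈ (A.drop (i - 1)).take (j - i + 1), e = none) ∧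
    A' = A.take (i - 1) ++ A.drop j

/-- The kinds of operations on strings. -/
inductive StrOp : Type
  | rev
  | transp
  | ins
  | del
deriving DecidableEq

def strOpRel (n : ℕ) : StrOp → List Gene → List Gene → Prop
  | StrOp.rev => RevN
  | StrOp.transp => TranspN
  | StrOp.ins => InsN n
  | StrOp.del => DelN

/-- The target string `ι^n = (1 2 … n)`. -/
def idList (n : ℕ) : List Gene := (List.range n).map (fun x => some (x + 1))

/-- `A` can be transformed into `ι^n` by a sequence of `s` operations of the model `M`. -/
def Reaches (n : ℕ) (M : Set StrOp) : ℕ → List Gene → Prop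
  | 0, A => A = idList n
  | s + 1, A => ∃ op ∈ M, ∃ A', strOpRel n op A A' ∧ Reaches n M s A'

/-- `d_M(A, ι^n)`: the minimum number of operations of the model `M` transforming
`A` into `ι^n` (`∞` if no such sequence exists). -/
noncomputable def distM (n : ℕ) (M : Set StrOp) (A : List Gene) : ℕ∞ :=
  sInf {c : ℕ∞ | ∃ s : ℕ, Reaches n M s A ∧ c = (s : ℕ∞)}

/-- The model `M^{φψ}_ρ`: reversals, insertions and deletions. -/
def Mrev : Set StrOp := {StrOp.rev, StrOp.ins, StrOp.del}
/-- The model `M^{φψ}_τ`: transpositions, insertions and deletions. -/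
def Mtra : Set StrOp := {StrOp.transp, StrOp.ins, StrOp.del}
/-- The model `M^{φψ}_{ρ,τ}`: reversals, transpositions, insertions and deletions. -/
def Mrevtra : Set StrOp := {StrOp.rev, StrOp.transp, StrOp.ins, StrOp.del}

/-- `(u, v)` is an unsigned-reversal breakpoint of the instance `I = (A, ι^n)`. -/
def IsBreakR (n : ℕ) (A : List Gene) (u v : Gene) : Prop :=
  v ≠ postOf n A u ∧ v ≠ antOf n A u

/-- `A` has at least one decreasing strip: either some non-breakpoint adjacency is
decreasing (the right element is the anterior of the left one), or some interior
non-`α` element is a singleton strip (it has breakpoints on both sides). -/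
def HasDecStrip (n : ℕ) (A : List Gene) : Prop :=
  (∃ t : ℕ, t + 1 < (extStr n A).length ∧
    (extStr n A).getD t none ≠ none ∧
    (extStr n A).getD (t + 1) none = antOf n A ((extStr n A).getD t none)) ∨
  (∃ t : ℕ, 1 ≤ t ∧ t + 1 < (extStr n A).length ∧
    (extStr n A).getD t none ≠ none ∧
    IsBreakR n A ((extStr n A).getD (t - 1) none) ((extStr n A).getD t none) ∧
    IsBreakR n A ((extStr n A).getD t none) ((extStr n A).getD (t + 1) none))

/-! Extend `A` by `0` and `n + 1` and read it as a list of naturals without repetitions.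
Let `x` end the longest prefix in which every element is followed by its posterior, and let
`y` be the posterior of `x`. That prefix contains every label `≤ x`, so `y` lies further right,
but not right after `x`; the element `b` just before `y` is not followed by its posterior
(only `x` is), and the run of posteriors starting at `y` cannot reach `n + 1`, since it would
have to pass through the element following `x`. Hence the extended string splits as
`X B C W` with breakpoints at all three junctions while `X C` glues `x` to `y`: the
transposition `X B C W ↦ X C B W` trades three breakpoints for at most two. -/

namespace List

variable {α : Type*}

def adjCount (p : α → α → Prop) [DecidableRel p] : List α → ℕ
  | a :: b :: l => (if p a b then 1 else 0) + adjCount p (b :: l)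
  | _ => 0

section AdjCount

variable (p : α → α → Prop) [DecidableRel p]

theorem adjCount_append : ∀ (X Y : List α) (hX : X ≠ []) (hY : Y ≠ []),
    adjCount p (X ++ Y) =
      adjCount p X + (if p (X.getLast hX) (Y.head hY) then 1 else 0) + adjCount p Y
  | [a], b :: Y, _, _ => by
    simp only [cons_append, nil_append, adjCount, getLast_singleton, head_cons, zero_add]
    rfl
  | a :: c :: X, Y, _, hY => by
    rw [cons_append, cons_append, adjCount, ← cons_append,
      adjCount_append (c :: X) Y (cons_ne_nil _ _) hY, getLast_cons_cons, adjCount]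
    omega

theorem adjCount_append_swap_add_one_le {X B C W : List α}
    (hX : X ≠ []) (hB : B ≠ []) (hC : C ≠ []) (hW : W ≠ [])
    (hXB : p (X.getLast hX) (B.head hB)) (hBC : p (B.getLast hB) (C.head hC))
    (hCW : p (C.getLast hC) (W.head hW)) (hXC : ¬ p (X.getLast hX) (C.head hC)) :
    adjCount p (X ++ C ++ B ++ W) + 1 ≤ adjCount p (X ++ B ++ C ++ W) := by
  simp only [append_assoc, adjCount_append _ _ _ hX (append_ne_nil_of_left_ne_nil hB _),
    adjCount_append _ _ _ hX (append_ne_nil_of_left_ne_nil hC _),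
    adjCount_append _ _ _ hB (append_ne_nil_of_left_ne_nil hC _),
    adjCount_append _ _ _ hC (append_ne_nil_of_left_ne_nil hB _),
    adjCount_append _ _ _ hB hW, adjCount_append _ _ _ hC hW, head_append_of_ne_nil hB,
    head_append_of_ne_nil hC]
  split_ifs <;> omega

theorem adjCount_map {β : Type*} (f : β → α) :
    ∀ l : List β, adjCount p (l.map f) = adjCount (fun a b => p (f a) (f b)) l
  | a :: b :: l => by simp only [map_cons, adjCount, ← adjCount_map f (b :: l), map_cons]
  | [] | [_] => rfl

theorem adjCount_congr {q : α → α → Prop} [DecidableRel q] :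
    ∀ {l : List α}, l.Nodup → (∀ a ∈ l, ∀ b ∈ l, a ≠ b → (p a b ↔ q a b)) →
      adjCount p l = adjCount q l
  | a :: b :: l, hl, h => by
    have hab : a ≠ b := fun hab => (nodup_cons.mp hl).1 (hab ▸ mem_cons_self)
    rw [adjCount, adjCount, adjCount_congr hl.of_cons
      (fun u hu v hv => h u (mem_cons_of_mem _ hu) v (mem_cons_of_mem _ hv)),
      if_congr (h a mem_cons_self b (by simp) hab) rfl rfl]
  | [], _, _ | [_], _, _ => rfl

theorem adjCount_eq_zero_iff :
    ∀ {l : List α}, adjCount p l = 0 ↔ IsChain (fun a b => ¬ p a b) l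
  | a :: b :: l => by
    rw [adjCount, isChain_cons_cons, ← adjCount_eq_zero_iff]
    split_ifs <;> simp_all
  | [] | [_] => by simp [adjCount]

theorem adjCount_eq_card_filter (d : α) : ∀ l : List α,
    adjCount p l = ((Finset.range (l.length - 1)).filter
      fun t => p (l.getD t d) (l.getD (t + 1) d)).card
  | a :: b :: l => by
    rw [adjCount, adjCount_eq_card_filter d (b :: l), Finset.card_filter, Finset.card_filter]
    simp only [length_cons, Nat.add_sub_cancel]
    rw [Finset.sum_range_succ']
    simp only [getD_cons_succ, getD_cons_zero]
    omega
  | [] | [_] => by simp [adjCount]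

end AdjCount

theorem exists_append_of_not_isChain {r : α → α → Prop} :
    ∀ {l : List α}, ¬ IsChain r l →
    ∃ X Y, ∃ (hX : X ≠ []) (hY : Y ≠ []),
      l = X ++ Y ∧ IsChain r X ∧ ¬ r (X.getLast hX) (Y.head hY)
  | a :: b :: l, h => by
    by_cases hab : r a b
    · obtain ⟨X, Y, hX, hY, hl, hXr, hXY⟩ :=
        exists_append_of_not_isChain fun hc => h (isChain_cons_cons.mpr ⟨hab, hc⟩)
      obtain ⟨c, X, rfl⟩ := exists_cons_of_ne_nil hX
      obtain ⟨rfl, rfl⟩ : b = c ∧ l = X ++ Y := by simpa using hl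
      exact ⟨a :: b :: X, Y, cons_ne_nil _ _, hY, rfl, isChain_cons_cons.mpr ⟨hab, hXr⟩,
        by rwa [getLast_cons_cons]⟩
    · exact ⟨[a], b :: l, cons_ne_nil _ _, cons_ne_nil _ _, rfl, isChain_singleton a, hab⟩
  | [], h | [_], h => absurd (by simp) h

theorem exists_eq_cons_append_of_cons_append_eq {a b : α} {L X M W : List α}
    (hX : X ≠ []) (hW : W ≠ []) (h : a :: L ++ [b] = X ++ M ++ W) :
    ∃ P S, X = a :: P ∧ W = S ++ [b] ∧ L = P ++ M ++ S := by
  obtain ⟨x, P, rfl⟩ := exists_cons_of_ne_nil hX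
  obtain ⟨S, w, rfl⟩ := (eq_nil_or_concat W).resolve_left hW
  obtain ⟨rfl, hL⟩ : a = x ∧ L ++ [b] = P ++ M ++ S ++ [w] := by simpa using h
  obtain ⟨rfl, hbw⟩ := append_inj' hL (by simp)
  exact ⟨P, S, rfl, by simpa using hbw.symm, rfl⟩

theorem exists_eq_map_some {A : List (Option α)} (h : none ∉ A) :
    ∃ L : List α, A = L.map some := by
  induction A with
  | nil => exact ⟨[], rfl⟩
  | cons a A ih =>
    obtain ⟨x, rfl⟩ := Option.ne_none_iff_exists'.mp fun ha => h (ha ▸ mem_cons_self)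
    obtain ⟨L, rfl⟩ := ih (not_mem_of_not_mem_cons h)
    exact ⟨x :: L, rfl⟩

section CoversIn

variable [LinearOrder α]

/-- `CoversIn l a b` says `b = posterior(a)` relative to the labels of `l`. -/
def CoversIn (l : List α) (a b : α) : Prop :=
  a < b ∧ ∀ z ∈ l, a < z → b ≤ z

variable {l : List α}

instance : DecidableRel (CoversIn l) := fun a b =>
  inferInstanceAs (Decidable (a < b ∧ ∀ z ∈ l, a < z → b ≤ z))

theorem coversIn_congr {l' : List α} (h : ∀ z, z ∈ l ↔ z ∈ l') :
    CoversIn l = CoversIn l' := by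
  funext a b
  simp only [CoversIn, h]

theorem CoversIn.left_unique {a b c : α} (ha : a ∈ l) (hb : b ∈ l) (hac : CoversIn l a c)
    (hbc : CoversIn l b c) : a = b := by
  rcases lt_trichotomy a b with hab | hab | hab
  · exact absurd (hac.2 b hb hab) (not_le.mpr hbc.1)
  · exact hab
  · exact absurd (hbc.2 a ha hab) (not_le.mpr hac.1)

theorem CoversIn.right_unique {a b c : α} (hb : b ∈ l) (hc : c ∈ l) (hab : CoversIn l a b)
    (hac : CoversIn l a c) : b = c :=
  le_antisymm (hab.2 c hc hac.1) (hac.2 b hb hab.1)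

theorem exists_coversIn {a z : α} (hz : z ∈ l) (haz : a < z) : ∃ b ∈ l, CoversIn l a b := by
  classical
  have hne : (l.toFinset.filter (a < ·)).Nonempty := ⟨z, by simp [hz, haz]⟩
  have hmem := Finset.mem_filter.mp ((l.toFinset.filter (a < ·)).min'_mem hne)
  refine ⟨_, mem_toFinset.mp hmem.1, hmem.2, fun y hy hay => Finset.min'_le _ _ ?_⟩
  simp [hy, hay]

theorem IsChain.le_getLast_of_coversIn : ∀ {X : List α} (hX : X ≠ []),
    IsChain (CoversIn l) X → ∀ z ∈ X, z ≤ X.getLast hX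
  | [a], _, _, z, hz => by simp_all
  | a :: b :: X, _, hc, z, hz => by
    rw [getLast_cons_cons]
    have hb := IsChain.le_getLast_of_coversIn (cons_ne_nil b X) hc.of_cons
    rcases mem_cons.mp hz with rfl | hz
    · exact (hc.rel.1.trans_le (hb b mem_cons_self)).le
    · exact hb z hz

theorem IsChain.mem_of_coversIn : ∀ {X : List α} (hX : X ≠ []),
    IsChain (CoversIn l) X → ∀ z ∈ l, X.head hX ≤ z → z ≤ X.getLast hX → z ∈ X
  | [a], _, _, z, _, h₁, h₂ => by simp_all [le_antisymm h₂ h₁]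
  | a :: b :: X, _, hc, z, hz, h₁, h₂ => by
    rcases h₁.eq_or_lt with rfl | h₁
    · exact mem_cons_self
    · rw [getLast_cons_cons] at h₂
      exact mem_cons_of_mem _ <|
        IsChain.mem_of_coversIn (cons_ne_nil b X) hc.of_cons z hz (hc.rel.2 z hz h₁) h₂

theorem exists_append_lt_of_not_isChain_coversIn (hl : l ≠ []) (hnd : l.Nodup)
    (hmin : ∀ z ∈ l, l.head hl ≤ z) (hbrk : ¬ IsChain (CoversIn l) l) :
    ∃ X R, ∃ (hX : X ≠ []) (hR : R ≠ []), l = X ++ R ∧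
      ¬ CoversIn l (X.getLast hX) (R.head hR) ∧ ∀ z ∈ l, z ∈ R ↔ X.getLast hX < z := by
  obtain ⟨X, R, hX, hR, hlXR, hXc, hXR⟩ := exists_append_of_not_isChain hbrk
  have hdXR : X.Disjoint R := disjoint_of_nodup_append (hlXR ▸ hnd)
  have hXhead : X.head hX = l.head hl := by simp only [hlXR, head_append_of_ne_nil hX]
  refine ⟨X, R, hX, hR, hlXR, hXR, fun z hz => ⟨fun hzR => ?_, fun hxz => ?_⟩⟩
  · by_contra! hzx
    exact hdXR (hXc.mem_of_coversIn hX z hz (hXhead ▸ hmin z hz) hzx) hzR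
  · rcases mem_append.mp (hlXR ▸ hz) with hzX | hzR
    · exact absurd (hXc.le_getLast_of_coversIn hX z hzX) (not_le.mpr hxz)
    · exact hzR

theorem exists_swap_of_not_isChain_coversIn (hl : l ≠ []) (hnd : l.Nodup)
    (hmin : ∀ z ∈ l, l.head hl ≤ z) (hmax : ∀ z ∈ l, z ≤ l.getLast hl)
    (hbrk : ¬ IsChain (CoversIn l) l) :
    ∃ X B C W, ∃ (hX : X ≠ []) (hB : B ≠ []) (hC : C ≠ []) (hW : W ≠ []),
      l = X ++ B ++ C ++ W ∧ ¬ CoversIn l (X.getLast hX) (B.head hB) ∧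
      ¬ CoversIn l (B.getLast hB) (C.head hC) ∧ ¬ CoversIn l (C.getLast hC) (W.head hW) ∧
      CoversIn l (X.getLast hX) (C.head hC) := by
  obtain ⟨X, R, hX, hR, hlXR, hXR, hRgt⟩ :=
    exists_append_lt_of_not_isChain_coversIn hl hnd hmin hbrk
  have hmemR : ∀ z ∈ R, z ∈ l := fun z hz => hlXR ▸ mem_append_right X hz
  obtain ⟨y, hyl, hxy⟩ :=
    exists_coversIn (hmemR _ (head_mem hR)) ((hRgt _ (hmemR _ (head_mem hR))).mp (head_mem hR))
  obtain ⟨B, T, rfl⟩ := mem_iff_append.mp ((hRgt y hyl).mpr hxy.1)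
  have hB : B ≠ [] := by
    rintro rfl
    exact hXR hxy
  have hBl : ∀ z ∈ B, z ∈ l := fun z hz => hmemR z (mem_append_left _ hz)
  have hBx : ¬ CoversIn l (B.getLast hB) y := fun h => by
    have hxb := (hRgt _ (hBl _ (getLast_mem hB))).mp (mem_append_left _ (getLast_mem hB))
    rw [CoversIn.left_unique (hBl _ (getLast_mem hB)) (hlXR ▸ mem_append_left _ (getLast_mem hX))
      h hxy] at hxb
    exact lt_irrefl _ hxb
  have hT : ¬ IsChain (CoversIn l) (y :: T) := fun hc => by
    have hb := hBl _ (head_mem hB)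
    have hyb : y ≤ B.head hB := hxy.2 _ hb ((hRgt _ hb).mp (mem_append_left _ (head_mem hB)))
    have hlast : (y :: T).getLast (cons_ne_nil y T) = l.getLast hl := by simp [hlXR]
    exact disjoint_of_nodup_append (nodup_append.mp (hlXR ▸ hnd)).2.1 (head_mem hB)
      (hc.mem_of_coversIn (cons_ne_nil y T) _ hb hyb (hlast ▸ hmax _ hb))
  obtain ⟨C, W, hC, hW, hCW, -, hCW'⟩ := exists_append_of_not_isChain hT
  have hyC : C.head hC = y := by
    obtain ⟨c, C, rfl⟩ := exists_cons_of_ne_nil hC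
    exact (cons_eq_cons.mp (hCW.trans (cons_append ..))).1.symm
  refine ⟨X, B, C, W, hX, hB, hC, hW, by rw [hlXR, hCW]; simp, ?_, hyC ▸ hBx, hCW',
    hyC ▸ hxy⟩
  simpa only [head_append_of_ne_nil hB] using hXR

end CoversIn

end List

open List

theorem transpN_append_swap {P B C S : List Gene} (hB : B ≠ []) (hC : C ≠ []) :
    TranspN (P ++ B ++ C ++ S) (P ++ C ++ B ++ S) := by
  have hB' := length_pos_of_ne_nil hB
  have hC' := length_pos_of_ne_nil hC
  refine ⟨P.length + 1, P.length + B.length + 1, P.length + B.length + C.length + 1,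
    by omega, by omega, by omega, by simp only [length_append]; omega, ?_⟩
  simp only [Nat.add_sub_cancel, Nat.add_sub_add_right, Nat.add_sub_cancel_left, append_assoc]
  simp [add_assoc, drop_append, drop_eq_nil_of_le]

theorem bT_eq_adjCount (n : ℕ) (A : List Gene) :
    bT n A = adjCount (fun u v => v ≠ postOf n A u) (extStr n A) := by
  rw [adjCount_eq_card_filter _ none]
  simp [bT, extStr]

theorem extStr_map_some (n : ℕ) (L : List ℕ) :
    extStr n (L.map some) = (0 :: L ++ [n + 1]).map some := by
  simp [extStr]

theorem ValidString.nodup_of_map_some {n : ℕ} {L : List ℕ} (hA : ValidString n (L.map some)) :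
    L.Nodup := by
  refine Nodup.of_map some (nodup_iff_count_le_one.mpr fun g => ?_)
  cases g with
  | none => simp [count_eq_zero.mpr (by simp : (none : Gene) ∉ L.map some)]
  | some x => exact hA.2 x

theorem nodup_zero_cons_append {n : ℕ} {L : List ℕ} (hL : ∀ z ∈ L, 1 ≤ z ∧ z ≤ n)
    (hnd : L.Nodup) : (0 :: L ++ [n + 1]).Nodup := by
  refine nodup_append.mpr ⟨nodup_cons.mpr ⟨fun h => absurd (hL 0 h).1 (by norm_num), hnd⟩,
    nodup_singleton _, fun a ha b hb => ?_⟩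
  rw [mem_singleton.mp hb]
  rcases mem_cons.mp ha with rfl | ha
  · omega
  · have := (hL a ha).2
    omega

theorem le_of_mem_zero_cons_append {n : ℕ} {L : List ℕ} (hL : ∀ z ∈ L, 1 ≤ z ∧ z ≤ n)
    {z : ℕ} (hz : z ∈ 0 :: L ++ [n + 1]) : z ≤ n + 1 := by
  simp only [mem_append, mem_cons, not_mem_nil, or_false] at hz
  rcases hz with (rfl | hz) | rfl
  · omega
  · exact (hL z hz).2.trans n.le_succ
  · rfl

theorem exists_postOf_map_some_eq_coversIn {n : ℕ} {L : List ℕ}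
    (hL : ∀ z ∈ L, 1 ≤ z ∧ z ≤ n) {a : ℕ} (ha : a ≤ n) : ∃ c ∈ 0 :: L ++ [n + 1],
      postOf n (L.map some) (some a) = some c ∧ CoversIn (0 :: L ++ [n + 1]) a c := by
  have hmem : ∀ z, z ∈ 0 :: L ++ [n + 1] ↔ z = 0 ∨ z ∈ L ∨ z = n + 1 := by simp
  have hfilter : ∀ y, y ∈ (Finset.Icc 1 n).filter (fun y => some y ∈ L.map some ∧ a < y) ↔
      y ∈ L ∧ a < y := by
    intro y
    simp only [Finset.mem_filter, Finset.mem_Icc, mem_map, Option.some_inj, exists_eq_right]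
    exact ⟨fun h => h.2, fun h => ⟨hL y h.1, h⟩⟩
  simp only [postOf]
  split_ifs with hne
  · have hm := (hfilter _).mp (Finset.min'_mem _ hne)
    refine ⟨_, (hmem _).mpr (Or.inr (Or.inl hm.1)), rfl, hm.2, fun z hz haz => ?_⟩
    rcases (hmem z).mp hz with rfl | hz | rfl
    · omega
    · exact Finset.min'_le _ _ ((hfilter z).mpr ⟨hz, haz⟩)
    · exact (hL _ hm.1).2.trans n.le_succ
  · refine ⟨n + 1, (hmem _).mpr (Or.inr (Or.inr rfl)), rfl, by omega, fun z hz haz => ?_⟩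
    rcases (hmem z).mp hz with rfl | hz | rfl
    · omega
    · exact absurd ⟨z, (hfilter z).mpr ⟨hz, haz⟩⟩ hne
    · exact le_rfl

theorem postOf_map_some_eq_some_iff {n : ℕ} {L : List ℕ} (hL : ∀ z ∈ L, 1 ≤ z ∧ z ≤ n)
    {a b : ℕ} (ha : a ∈ 0 :: L ++ [n + 1]) (hb : b ∈ 0 :: L ++ [n + 1]) (hab : a ≠ b) :
    postOf n (L.map some) (some a) = some b ↔ CoversIn (0 :: L ++ [n + 1]) a b := by
  have hbn := le_of_mem_zero_cons_append hL hb
  rcases (le_of_mem_zero_cons_append hL ha).lt_or_eq with han | rfl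
  · obtain ⟨c, hc, hpost, hac⟩ := exists_postOf_map_some_eq_coversIn hL (Nat.le_of_lt_succ han)
    rw [hpost, Option.some_inj]
    exact ⟨fun hcb => hcb ▸ hac, fun hab => CoversIn.right_unique hc hb hac hab⟩
  · refine iff_of_false (fun h => hab ?_) (fun h => absurd h.1 (by omega))
    have hempty :
        ¬ ((Finset.Icc 1 n).filter (fun y => some y ∈ L.map some ∧ n + 1 < y)).Nonempty :=
      fun ⟨y, hy⟩ => by simp only [Finset.mem_filter, Finset.mem_Icc] at hy; omega
    rwa [postOf, dif_neg hempty, Option.some_inj] at h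

theorem bT_map_some_of_perm {n : ℕ} {L L' : List ℕ} (hL : ∀ z ∈ L, 1 ≤ z ∧ z ≤ n)
    (hnd : (0 :: L ++ [n + 1]).Nodup) (hperm : L' ~ L) :
    bT n (L'.map some) =
      adjCount (fun a b => ¬ CoversIn (0 :: L ++ [n + 1]) a b) (0 :: L' ++ [n + 1]) := by
  have hext : 0 :: L' ++ [n + 1] ~ 0 :: L ++ [n + 1] := (hperm.cons 0).append_right _
  rw [bT_eq_adjCount, extStr_map_some, adjCount_map]
  exact adjCount_congr _ (hext.nodup_iff.mpr hnd) fun a ha b hb hab =>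
    ne_comm.trans <| not_congr <|
      (postOf_map_some_eq_some_iff (fun z hz => hL z (hperm.subset hz)) ha hb hab).trans
        (by rw [coversIn_congr fun _ => hext.mem_iff])

/-- For any classical instance `I = (A, ι^n)` of unsigned strings such
that `b_τ(I) > 0` and `Σ_A \ Σ_{ι^n} = ∅` (A contains no α-element), there exists a
transposition removing at least one transposition breakpoint of `A`. -/
theorem transposition_removes_breakpoint
    (n : ℕ) (A : List Gene) (hA : ValidString n A)
    (hb : 0 < bT n A) (hNoAlpha : (none : Gene) ∉ A) :
    ∃ A' : List Gene, TranspN A A' ∧ bT n A' + 1 ≤ bT n A := by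
  obtain ⟨L, rfl⟩ := exists_eq_map_some hNoAlpha
  have hL : ∀ z ∈ L, 1 ≤ z ∧ z ≤ n := fun z hz => hA.1 z (mem_map_of_mem hz)
  have hnd := nodup_zero_cons_append hL hA.nodup_of_map_some
  have hbrk : ¬ IsChain (CoversIn (0 :: L ++ [n + 1])) (0 :: L ++ [n + 1]) := by
    rw [bT_map_some_of_perm hL hnd (Perm.refl L), pos_iff_ne_zero, Ne,
      adjCount_eq_zero_iff] at hb
    simpa only [not_not] using hb
  obtain ⟨X, B, C, W, hX, hB, hC, hW, hl, hXB, hBC, hCW, hXC⟩ :=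
    exists_swap_of_not_isChain_coversIn (by simp) hnd (fun z _ => Nat.zero_le z)
      (fun z hz => by simpa using le_of_mem_zero_cons_append hL hz) hbrk
  obtain ⟨P, S, rfl, rfl, rfl⟩ :=
    exists_eq_cons_append_of_cons_append_eq (M := B ++ C) hX hW (by rw [hl]; simp)
  have htr := transpN_append_swap (P := P.map some) (B := B.map some) (C := C.map some)
    (S := S.map some) (by simpa using hB) (by simpa using hC)
  refine ⟨(P ++ C ++ B ++ S).map some, by simpa using htr, ?_⟩
  have hperm : P ++ C ++ B ++ S ~ P ++ (B ++ C) ++ S := by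
    rw [append_assoc P C B]
    exact (perm_append_comm.append_left P).append_right S
  rw [bT_map_some_of_perm hL hnd hperm, bT_map_some_of_perm hL hnd (Perm.refl _)]
  convert adjCount_append_swap_add_one_le (fun a b => ¬ CoversIn _ a b)
    hX hB hC hW hXB hBC hCW (not_not.mpr hXC) using 2
  simp
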